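/- Given an operator c on FP-soft sets over X satisfying the Kuratowski closure axioms (c(F_∅) = F_∅; F_A ⊆̃ c(F_A); c(F_A ∪̃ F_B) = c(F_A) ∪̃ c(F_B); c(c(F_A)) = c(F_A)), the family τ = {F_A^c : c(F_A) = F_A} is an FP-soft topology on X, and the FP-soft closure with respect to τ coincides with c, i.e., cl_τ(F_A) = c(F_A) for every FP-soft set F_A. -/

import Mathlib

open Set unitInterval

instance : Fact ((0:ℝ) ≤ 1) := ⟨zero_le_one⟩

noncomputable section

structure FPSoft (X E : Type*) where
  mu : E → unitInterval
  app : E → Set X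

namespace FPSoft
variable {X Y E K : Type*}

/-- FP-soft subset relation. -/
def Subset (F G : FPSoft X E) : Prop := ∀ e, F.mu e ≤ G.mu e ∧ F.app e ⊆ G.app e

/-- Complement of an FP-soft set. -/
def compl (F : FPSoft X E) : FPSoft X E := ⟨fun e => σ (F.mu e), fun e => (F.app e)ᶜ⟩

def inter (F G : FPSoft X E) : FPSoft X E :=
  ⟨fun e => F.mu e ⊓ G.mu e, fun e => F.app e ∩ G.app e⟩

def union (F G : FPSoft X E) : FPSoft X E :=
  ⟨fun e => F.mu e ⊔ G.mu e, fun e => F.app e ∪ G.app e⟩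

def iUnion {ι : Type*} (F : ι → FPSoft X E) : FPSoft X E :=
  ⟨fun e => ⨆ i, (F i).mu e, fun e => ⋃ i, (F i).app e⟩

def iInter {ι : Type*} (F : ι → FPSoft X E) : FPSoft X E :=
  ⟨fun e => ⨅ i, (F i).mu e, fun e => ⋂ i, (F i).app e⟩

def sUnion (S : Set (FPSoft X E)) : FPSoft X E :=
  ⟨fun e => ⨆ F ∈ S, F.mu e, fun e => ⋃ F ∈ S, F.app e⟩

def sInter (S : Set (FPSoft X E)) : FPSoft X E :=
  ⟨fun e => ⨅ F ∈ S, F.mu e, fun e => ⋂ F ∈ S, F.app e⟩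

/-- The empty FP-soft set. -/
def empty : FPSoft X E := ⟨fun _ => 0, fun _ => ∅⟩

/-- The universal FP-soft set. -/
def univ : FPSoft X E := ⟨fun _ => 1, fun _ => Set.univ⟩

/-- FP-soft quasi-coincidence. -/
def Quasi (F G : FPSoft X E) : Prop :=
  ∃ e, 1 < (F.mu e : ℝ) + (G.mu e : ℝ) ∨ (F.app e ∩ G.app e).Nonempty

/-- The FP-soft point with parameter `e`, value `α` and set `f` belongs to `F`. -/
def ptMem (e : E) (α : unitInterval) (f : Set X) (F : FPSoft X E) : Prop :=
  α ≤ F.mu e ∧ f ⊆ F.app e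

/-- The FP-soft point with parameter `e`, value `α` and set `f` is quasi-coincident with `F`. -/
def ptQuasi (e : E) (α : unitInterval) (f : Set X) (F : FPSoft X E) : Prop :=
  1 < (α : ℝ) + (F.mu e : ℝ) ∨ (f ∩ F.app e).Nonempty

/-- Image of an FP-soft set under the FP-soft mapping induced by `u` and `p`. -/
def image (u : X → Y) (p : E → K) (F : FPSoft X E) : FPSoft Y K :=
  ⟨fun k => ⨆ e ∈ p ⁻¹' {k}, F.mu e, fun k => ⋃ e ∈ p ⁻¹' {k}, u '' F.app e⟩

/-- Preimage of an FP-soft set under the FP-soft mapping induced by `u` and `p`. -/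
def preimage (u : X → Y) (p : E → K) (G : FPSoft Y K) : FPSoft X E :=
  ⟨fun e => G.mu (p e), fun e => u ⁻¹' G.app (p e)⟩

/-- `τ` is an FP-soft topology. -/
def IsTopology (τ : Set (FPSoft X E)) : Prop :=
  empty ∈ τ ∧ univ ∈ τ ∧ (∀ F ∈ τ, ∀ G ∈ τ, inter F G ∈ τ) ∧ (∀ S ⊆ τ, sUnion S ∈ τ)

/-- `F` is FP-soft closed with respect to `τ`. -/
def IsClosed (τ : Set (FPSoft X E)) (F : FPSoft X E) : Prop := compl F ∈ τ

/-- FP-soft closure: intersection of all FP-soft closed supersets. -/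
def closure (τ : Set (FPSoft X E)) (F : FPSoft X E) : FPSoft X E :=
  sInter {G | IsClosed τ G ∧ Subset F G}

/-- FP-soft interior: union of all FP-soft open subsets. -/
def interior (τ : Set (FPSoft X E)) (F : FPSoft X E) : FPSoft X E :=
  sUnion {G | G ∈ τ ∧ Subset G F}

end FPSoft

/-! A Kuratowski operator `c` is monotone because `F ⊆̃ G` gives
`c G = c (F ∪̃ G) = c F ∪̃ c G`. Hence an intersection of `c`-fixed sets is `c`-fixed, so by
De Morgan the complements of the fixed sets are closed under arbitrary unions, and under finite
intersections because `c` preserves binary unions. For the closure, `c F` is itself closed and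
contains `F`, while monotonicity puts `c F` inside every closed superset `G = c G` of `F`. -/

namespace unitInterval

def symmOrderIso : I ≃o Iᵒᵈ where
  toEquiv := symm_involutive.toPerm.trans OrderDual.toDual
  map_rel_iff' := symm_le_symm

lemma symm_sup (a b : I) : σ (a ⊔ b) = σ a ⊓ σ b :=
  symmOrderIso.map_sup a b

lemma symm_iSup {ι : Sort*} (f : ι → I) : σ (⨆ i, f i) = ⨅ i, σ (f i) :=
  symmOrderIso.map_iSup f

end unitInterval

namespace FPSoft

variable {X E : Type*}

lemma ext {F G : FPSoft X E} (hmu : F.mu = G.mu) (happ : F.app = G.app) : F = G := by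
  cases F; cases G; congr

lemma Subset.antisymm {F G : FPSoft X E} (hFG : Subset F G) (hGF : Subset G F) : F = G :=
  ext (funext fun e => le_antisymm (hFG e).1 (hGF e).1)
    (funext fun e => (hFG e).2.antisymm (hGF e).2)

lemma subset_univ (F : FPSoft X E) : Subset F univ :=
  fun _ => ⟨le_one _, Set.subset_univ _⟩

lemma subset_union_left (F G : FPSoft X E) : Subset F (union F G) :=
  fun _ => ⟨le_sup_left, Set.subset_union_left⟩

lemma union_eq_right {F G : FPSoft X E} (h : Subset F G) : union F G = G :=
  ext (funext fun e => sup_eq_right.2 (h e).1)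
    (funext fun e => Set.union_eq_self_of_subset_left (h e).2)

lemma sInter_subset_of_mem {S : Set (FPSoft X E)} {G : FPSoft X E} (hG : G ∈ S) :
    Subset (sInter S) G :=
  fun _ => ⟨iInf₂_le G hG, Set.biInter_subset_of_mem hG⟩

lemma subset_sInter {S : Set (FPSoft X E)} {F : FPSoft X E} (h : ∀ G ∈ S, Subset F G) :
    Subset F (sInter S) :=
  fun e => ⟨le_iInf₂ fun G hG => (h G hG e).1, Set.subset_iInter₂ fun G hG => (h G hG e).2⟩

@[simp]
lemma compl_compl (F : FPSoft X E) : compl (compl F) = F :=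
  ext (funext fun _ => symm_symm _) (funext fun _ => _root_.compl_compl _)

lemma compl_eq_comm {F G : FPSoft X E} : compl F = G ↔ F = compl G := by
  constructor <;> rintro rfl <;> simp

lemma compl_empty : compl (empty : FPSoft X E) = univ :=
  ext (funext fun _ => symm_zero) (funext fun _ => Set.compl_empty)

lemma compl_univ : compl (univ : FPSoft X E) = empty :=
  ext (funext fun _ => symm_one) (funext fun _ => Set.compl_univ)

lemma compl_union (F G : FPSoft X E) : compl (union F G) = inter (compl F) (compl G) :=
  ext (funext fun _ => symm_sup _ _) (funext fun _ => Set.compl_union _ _)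

lemma compl_sUnion (S : Set (FPSoft X E)) : compl (sUnion S) = sInter (compl '' S) := by
  refine ext (funext fun e => ?_) (funext fun e => ?_)
  · simp only [compl, sUnion, sInter, iInf_image, symm_iSup]
  · simp only [compl, sUnion, sInter, Set.biInter_image, Set.compl_iUnion]

lemma closure_eq_of_isClosed {τ : Set (FPSoft X E)} {F G : FPSoft X E} (hG : IsClosed τ G)
    (hFG : Subset F G) (hmin : ∀ H, IsClosed τ H → Subset F H → Subset G H) :
    closure τ F = G :=
  Subset.antisymm (sInter_subset_of_mem ⟨hG, hFG⟩)
    (subset_sInter fun H ⟨hH, hFH⟩ => hmin H hH hFH)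

def openSetsOfClosure (c : FPSoft X E → FPSoft X E) : Set (FPSoft X E) :=
  {G | ∃ F, c F = F ∧ G = compl F}

section ClosureOperator

variable {c : FPSoft X E → FPSoft X E}

lemma isClosed_openSetsOfClosure_iff {F : FPSoft X E} :
    IsClosed (openSetsOfClosure c) F ↔ c F = F := by
  constructor
  · rintro ⟨G, hG, hFG⟩
    rwa [compl_eq_comm.1 hFG, compl_compl]
  · exact fun hF => ⟨F, hF, rfl⟩

lemma compl_mem_openSetsOfClosure {F : FPSoft X E} (hF : c F = F) :
    compl F ∈ openSetsOfClosure c :=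
  ⟨F, hF, rfl⟩

lemma subset_map_of_map_union (hc : ∀ F G, c (union F G) = union (c F) (c G))
    {F G : FPSoft X E} (h : Subset F G) : Subset (c F) (c G) := by
  have hcG : c G = union (c F) (c G) := by rw [← hc, union_eq_right h]
  exact hcG ▸ subset_union_left _ _

lemma map_univ_of_subset_map (hc : ∀ F, Subset F (c F)) : c univ = univ :=
  Subset.antisymm (subset_univ _) (hc _)

lemma map_sInter_of_forall_map_eq (hext : ∀ F, Subset F (c F))
    (hunion : ∀ F G, c (union F G) = union (c F) (c G))
    {S : Set (FPSoft X E)} (hS : ∀ F ∈ S, c F = F) : c (sInter S) = sInter S :=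
  Subset.antisymm
    (subset_sInter fun F hF => hS F hF ▸ subset_map_of_map_union hunion (sInter_subset_of_mem hF))
    (hext _)

lemma isTopology_openSetsOfClosure (hempty : c empty = empty) (hext : ∀ F, Subset F (c F))
    (hunion : ∀ F G, c (union F G) = union (c F) (c G)) :
    IsTopology (openSetsOfClosure c) := by
  refine ⟨?_, ?_, ?_, fun S hS => ?_⟩
  · exact compl_univ ▸ compl_mem_openSetsOfClosure (map_univ_of_subset_map hext)
  · exact compl_empty ▸ compl_mem_openSetsOfClosure hempty
  · rintro _ ⟨F, hF, rfl⟩ _ ⟨G, hG, rfl⟩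
    exact compl_union F G ▸ compl_mem_openSetsOfClosure (by rw [hunion, hF, hG])
  · have hfixed : ∀ F ∈ compl '' S, c F = F := by
      rintro _ ⟨G, hG, rfl⟩
      obtain ⟨F, hF, rfl⟩ := hS hG
      rwa [compl_compl]
    rw [← compl_compl (sUnion S), compl_sUnion]
    exact compl_mem_openSetsOfClosure (map_sInter_of_forall_map_eq hext hunion hfixed)

lemma closure_openSetsOfClosure (hext : ∀ F, Subset F (c F))
    (hunion : ∀ F G, c (union F G) = union (c F) (c G)) (hidem : ∀ F, c (c F) = c F)
    (F : FPSoft X E) : closure (openSetsOfClosure c) F = c F :=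
  closure_eq_of_isClosed (isClosed_openSetsOfClosure_iff.2 (hidem F)) (hext F) fun _ hG hFG =>
    isClosed_openSetsOfClosure_iff.1 hG ▸ subset_map_of_map_union hunion hFG

end ClosureOperator

end FPSoft

theorem fp_closure_operator_topology {X E : Type*} (c : FPSoft X E → FPSoft X E)
    (hc1 : c FPSoft.empty = FPSoft.empty)
    (hc2 : ∀ F : FPSoft X E, FPSoft.Subset F (c F))
    (hc3 : ∀ F G : FPSoft X E, c (FPSoft.union F G) = FPSoft.union (c F) (c G))
    (hc4 : ∀ F : FPSoft X E, c (c F) = c F) :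
    FPSoft.IsTopology {G : FPSoft X E | ∃ F, c F = F ∧ G = FPSoft.compl F} ∧
      ∀ F : FPSoft X E,
        FPSoft.closure {G : FPSoft X E | ∃ F, c F = F ∧ G = FPSoft.compl F} F = c F :=
  ⟨FPSoft.isTopology_openSetsOfClosure hc1 hc2 hc3,
    FPSoft.closure_openSetsOfClosure hc2 hc3 hc4⟩
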